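/- arXiv:1202.6001 — 2 statements merged into one kernel-verified Lean document; each statement's English description precedes it below -/
import Mathlib

section
/- (Validity of Proposal.) Fix integers d ≥ 1 and n ≥ 1. For k = 1,…,d let θ^(k)_{ab} ≥ 0 (a,b ∈ {0,1}) and μ^(k) ∈ [0,1]. Let Γ = Θ^(1) ⊗ ⋯ ⊗ Θ^(d), let v : {0,…,2^d−1} → ℕ, let E_c := n·∏_{k=1}^d (μ^(k))^{c_k}(1−μ^(k))^{1−c_k} where c_k is the k-th binary digit of c, let F := {c : E_c ≥ 1} and I := {c : E_c < 1}, and let m_F, m_I ≥ 0 be reals satisfying v_c ≤ m_F·E_c for all c ∈ F and v_c ≤ m_I for all c ∈ I. Define Λ'_{cc'} := Λ^(FF)_{cc'} + Λ^(FI)_{cc'} + Λ^(IF)_{cc'} + Λ^(II)_{cc'}, where Λ^(FF) = ⊗_{k=1}^d (n m_F)^{2/d} M^(FF,k), Λ^(FI) = ⊗_k (n m_F m_I)^{1/d} M^(FI,k), Λ^(IF) = ⊗_k (n m_I m_F)^{1/d} M^(IF,k), Λ^(II) = ⊗_k (m_I)^{2/d} Θ^(k), with M^(FF,k)_{ab}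 = (μ^(k))^a(1−μ^(k))^{1−a}(μ^(k))^b(1−μ^(k))^{1−b}θ^(k)_{ab}, M^(FI,k)_{ab} = (μ^(k))^a(1−μ^(k))^{1−a}θ^(k)_{ab}, and M^(IF,k)_{ab} = (μ^(k))^b(1−μ^(k))^{1−b}θ^(k)_{ab}. Then for all colors 0 ≤ c, c' ≤ 2^d − 1, Λ_{cc'} := v_c · v_{c'} · Γ_{cc'} ≤ Λ'_{cc'}. -/
/-! Every color satisfies `v_c ≤ m_F E_c + m_I`, whichever class it lies in. Each proposal
component is a `d`-fold Kronecker product of `s^{1/d}` or `s^{2/d}` times a matrix whose entries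
factor along the binary digits, so the four components evaluate to the four terms of
`(m_F E_c + m_I)(m_F E_{c'} + m_I) Γ_{cc'}`, which bounds `v_c v_{c'} Γ_{cc'}`. -/

/-- The `d`-fold Kronecker product `Θ⁽¹⁾ ⊗ Θ⁽²⁾ ⊗ ⋯ ⊗ Θ⁽ᵈ⁾` of `2 × 2` real
matrices (`Θ k a b` is the `(a,b)` entry of the `(k+1)`-st initiator matrix,
`a, b ∈ {0,1}`), viewed as a `2^d × 2^d` matrix indexed by `0, …, 2^d − 1`, so
that its `(c,c')` entry is `∏_k θ⁽ᵏ⁾_{c_k c'_k}` with `c_k` the binary digits of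
`c` (most significant first). -/
noncomputable def kronFold : (ℕ → ℕ → ℕ → ℝ) → ℕ → ℕ → ℕ → ℝ
  | _, 0 => fun _ _ => 1
  | Θ, (d + 1) => fun i j =>
      Θ 0 (i / 2 ^ d) (j / 2 ^ d) *
        kronFold (fun k => Θ (k + 1)) d (i % 2 ^ d) (j % 2 ^ d)

/-- The `(k+1)`-st most significant binary digit of the color `c ∈ {0,…,2^d−1}`,
i.e. `c_k = ⌊c / 2^(d−1−k)⌋ mod 2` for `k ∈ {0,…,d−1}`. -/
def bitOf (d k c : ℕ) : ℕ := c / 2 ^ (d - 1 - k) % 2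

/-- `E_c`, the expected number of nodes of color `c` among `n` nodes whose
attribute bits are independent Bernoulli(`μ⁽ᵏ⁾`):
`E_c = n · ∏_{k=1}^d (μ⁽ᵏ⁾)^{c_k} (1−μ⁽ᵏ⁾)^{1−c_k}`. -/
noncomputable def Ecol (n d : ℕ) (μ : ℕ → ℝ) (c : ℕ) : ℝ :=
  (n : ℝ) * ∏ k ∈ Finset.range d,
    μ k ^ bitOf d k c * (1 - μ k) ^ (1 - bitOf d k c)

/-- Initiator matrices `(n m_F)^{2/d} M^(FF,k)` of the frequent–frequent
proposal component, `M^(FF,k)_{ab} = μ^a(1−μ)^{1−a} μ^b(1−μ)^{1−b} θ_{ab}`. -/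
noncomputable def thetaFF (d n : ℕ) (μ : ℕ → ℝ) (θ : ℕ → ℕ → ℕ → ℝ) (mF : ℝ) :
    ℕ → ℕ → ℕ → ℝ := fun k a b =>
  ((n : ℝ) * mF) ^ ((2 : ℝ) / (d : ℝ)) *
    (μ k ^ a * (1 - μ k) ^ (1 - a) * (μ k ^ b * (1 - μ k) ^ (1 - b)) * θ k a b)

/-- Initiator matrices `(n m_F m_I)^{1/d} M^(FI,k)` of the frequent–infrequent
proposal component, `M^(FI,k)_{ab} = μ^a(1−μ)^{1−a} θ_{ab}`. -/
noncomputable def thetaFI (d n : ℕ) (μ : ℕ → ℝ) (θ : ℕ → ℕ → ℕ → ℝ) (mF mI : ℝ) :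
    ℕ → ℕ → ℕ → ℝ := fun k a b =>
  ((n : ℝ) * mF * mI) ^ ((1 : ℝ) / (d : ℝ)) *
    (μ k ^ a * (1 - μ k) ^ (1 - a) * θ k a b)

/-- Initiator matrices `(n m_I m_F)^{1/d} M^(IF,k)` of the infrequent–frequent
proposal component, `M^(IF,k)_{ab} = μ^b(1−μ)^{1−b} θ_{ab}`. -/
noncomputable def thetaIF (d n : ℕ) (μ : ℕ → ℝ) (θ : ℕ → ℕ → ℕ → ℝ) (mF mI : ℝ) :
    ℕ → ℕ → ℕ → ℝ := fun k a b =>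
  ((n : ℝ) * mI * mF) ^ ((1 : ℝ) / (d : ℝ)) *
    (μ k ^ b * (1 - μ k) ^ (1 - b) * θ k a b)

/-- Initiator matrices `(m_I)^{2/d} Θ⁽ᵏ⁾` of the infrequent–infrequent
proposal component. -/
noncomputable def thetaII (d : ℕ) (θ : ℕ → ℕ → ℕ → ℝ) (mI : ℝ) :
    ℕ → ℕ → ℕ → ℝ := fun k a b =>
  mI ^ ((2 : ℝ) / (d : ℝ)) * θ k a b


theorem Nat.mod_two_pow_div_two_pow_mod_two (c : ℕ) {j d : ℕ} (h : j < d) :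
    c % 2 ^ d / 2 ^ j % 2 = c / 2 ^ j % 2 := by
  rw [← Nat.mod_mul_right_div_self, ← Nat.mod_mul_right_div_self, ← pow_succ,
    Nat.mod_mod_of_dvd _ (pow_dvd_pow 2 h)]

theorem bitOf_succ_succ {d k : ℕ} (c : ℕ) (hk : k < d) :
    bitOf (d + 1) (k + 1) c = bitOf d k (c % 2 ^ d) := by
  unfold bitOf
  rw [show d + 1 - 1 - (k + 1) = d - 1 - k by omega,
    Nat.mod_two_pow_div_two_pow_mod_two c (by omega)]

theorem bitOf_succ_zero {d c : ℕ} (hc : c < 2 ^ (d + 1)) : bitOf (d + 1) 0 c = c / 2 ^ d := by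
  unfold bitOf
  rw [Nat.add_sub_cancel, Nat.sub_zero]
  exact Nat.mod_eq_of_lt (Nat.div_lt_of_lt_mul (by rwa [← pow_succ]))

theorem kronFold_eq_prod (Θ : ℕ → ℕ → ℕ → ℝ) {d c c' : ℕ} (hc : c < 2 ^ d) (hc' : c' < 2 ^ d) :
    kronFold Θ d c c' = ∏ k ∈ Finset.range d, Θ k (bitOf d k c) (bitOf d k c') := by
  induction d generalizing Θ c c' with
  | zero => simp [kronFold]
  | succ d ih =>
    simp only [kronFold]
    rw [Finset.prod_range_succ', bitOf_succ_zero hc, bitOf_succ_zero hc',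
      ih _ (Nat.mod_lt _ (by positivity)) (Nat.mod_lt _ (by positivity)), mul_comm]
    congr 1
    refine Finset.prod_congr rfl fun k hk => ?_
    rw [bitOf_succ_succ c (Finset.mem_range.mp hk), bitOf_succ_succ c' (Finset.mem_range.mp hk)]

theorem kronFold_nonneg {Θ : ℕ → ℕ → ℕ → ℝ} (hΘ : ∀ k a b, 0 ≤ Θ k a b) (d i j : ℕ) :
    0 ≤ kronFold Θ d i j := by
  induction d generalizing Θ i j with
  | zero => simp [kronFold]
  | succ d ih => exact mul_nonneg (hΘ _ _ _) (ih (fun k => hΘ (k + 1)) _ _)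

theorem kronFold_const_mul (s : ℝ) (Θ : ℕ → ℕ → ℕ → ℝ) (d i j : ℕ) :
    kronFold (fun k a b => s * Θ k a b) d i j = s ^ d * kronFold Θ d i j := by
  induction d generalizing Θ i j with
  | zero => simp [kronFold]
  | succ d ih =>
    simp only [kronFold]
    rw [ih (fun k => Θ (k + 1))]
    ring

theorem Real.rpow_div_natCast_pow {x : ℝ} (hx : 0 ≤ x) (y : ℝ) {d : ℕ} (hd : d ≠ 0) :
    (x ^ (y / d)) ^ d = x ^ y := by
  rw [← Real.rpow_natCast, ← Real.rpow_mul hx, div_mul_cancel₀ _ (Nat.cast_ne_zero.mpr hd)]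

theorem Ecol_nonneg (n d : ℕ) {μ : ℕ → ℝ} (hμ : ∀ k, μ k ∈ Set.Icc (0 : ℝ) 1) (c : ℕ) :
    0 ≤ Ecol n d μ c :=
  mul_nonneg n.cast_nonneg <| Finset.prod_nonneg fun k _ =>
    mul_nonneg (pow_nonneg (hμ k).1 _) (pow_nonneg (sub_nonneg.mpr (hμ k).2) _)

section ProposalComponents

variable {d : ℕ} (n : ℕ) (μ : ℕ → ℝ) (θ : ℕ → ℕ → ℕ → ℝ) {mF mI : ℝ} {c c' : ℕ}

theorem kronFold_thetaFF (hd : d ≠ 0) (hmF : 0 ≤ mF) (hc : c < 2 ^ d) (hc' : c' < 2 ^ d) :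
    kronFold (thetaFF d n μ θ mF) d c c'
      = mF * Ecol n d μ c * (mF * Ecol n d μ c') * kronFold θ d c c' := by
  unfold thetaFF
  rw [kronFold_const_mul,
    Real.rpow_div_natCast_pow (mul_nonneg n.cast_nonneg hmF) _ hd, Real.rpow_two,
    kronFold_eq_prod _ hc hc', kronFold_eq_prod _ hc hc']
  simp only [Ecol, Finset.prod_mul_distrib]
  ring

theorem kronFold_thetaFI (hd : d ≠ 0) (hmF : 0 ≤ mF) (hmI : 0 ≤ mI)
    (hc : c < 2 ^ d) (hc' : c' < 2 ^ d) :
    kronFold (thetaFI d n μ θ mF mI) d c c' = mF * Ecol n d μ c * mI * kronFold θ d c c' := by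
  unfold thetaFI
  rw [kronFold_const_mul,
    Real.rpow_div_natCast_pow (by positivity) _ hd, Real.rpow_one,
    kronFold_eq_prod _ hc hc', kronFold_eq_prod _ hc hc']
  simp only [Ecol, Finset.prod_mul_distrib]
  ring

theorem kronFold_thetaIF (hd : d ≠ 0) (hmF : 0 ≤ mF) (hmI : 0 ≤ mI)
    (hc : c < 2 ^ d) (hc' : c' < 2 ^ d) :
    kronFold (thetaIF d n μ θ mF mI) d c c' = mI * (mF * Ecol n d μ c') * kronFold θ d c c' := by
  unfold thetaIF
  rw [kronFold_const_mul,
    Real.rpow_div_natCast_pow (by positivity) _ hd, Real.rpow_one,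
    kronFold_eq_prod _ hc hc', kronFold_eq_prod _ hc hc']
  simp only [Ecol, Finset.prod_mul_distrib]
  ring

theorem kronFold_thetaII (hd : d ≠ 0) (hmI : 0 ≤ mI) (i j : ℕ) :
    kronFold (thetaII d θ mI) d i j = mI * mI * kronFold θ d i j := by
  unfold thetaII
  rw [kronFold_const_mul, Real.rpow_div_natCast_pow hmI _ hd, Real.rpow_two, sq]

end ProposalComponents

theorem proposal_validity_general (d n : ℕ) (hd : 1 ≤ d)
    (θ : ℕ → ℕ → ℕ → ℝ) (hθ : ∀ k a b, 0 ≤ θ k a b)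
    (μ : ℕ → ℝ) (hμ : ∀ k, μ k ∈ Set.Icc (0 : ℝ) 1)
    (v : ℕ → ℕ) (mF mI : ℝ) (hmF : 0 ≤ mF) (hmI : 0 ≤ mI)
    (hF : ∀ c < 2 ^ d, 1 ≤ Ecol n d μ c → (v c : ℝ) ≤ mF * Ecol n d μ c)
    (hI : ∀ c < 2 ^ d, Ecol n d μ c < 1 → (v c : ℝ) ≤ mI)
    (c c' : ℕ) (hc : c < 2 ^ d) (hc' : c' < 2 ^ d) :
    (v c : ℝ) * (v c' : ℝ) * kronFold θ d c c'
      ≤ kronFold (thetaFF d n μ θ mF) d c c'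
        + kronFold (thetaFI d n μ θ mF mI) d c c'
        + kronFold (thetaIF d n μ θ mF mI) d c c'
        + kronFold (thetaII d θ mI) d c c' := by
  have hd0 : d ≠ 0 := by omega
  have hE : ∀ x, 0 ≤ mF * Ecol n d μ x := fun x => mul_nonneg hmF (Ecol_nonneg n d hμ x)
  have hv : ∀ x < 2 ^ d, (v x : ℝ) ≤ mF * Ecol n d μ x + mI := by
    intro x hx
    have := hE x
    rcases le_or_gt 1 (Ecol n d μ x) with hfreq | hinfreq
    · linarith [hF x hx hfreq]
    · linarith [hI x hx hinfreq]
  rw [kronFold_thetaFF n μ θ hd0 hmF hc hc', kronFold_thetaFI n μ θ hd0 hmF hmI hc hc',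
    kronFold_thetaIF n μ θ hd0 hmF hmI hc hc', kronFold_thetaII θ hd0 hmI]
  calc (v c : ℝ) * v c' * kronFold θ d c c'
      ≤ (mF * Ecol n d μ c + mI) * (mF * Ecol n d μ c' + mI) * kronFold θ d c c' := by
        gcongr
        · exact kronFold_nonneg hθ d c c'
        · exact add_nonneg (hE c) hmI
        · exact hv c hc
        · exact hv c' hc'
    _ = _ := by ring

/-- **Validity of the proposal (Theorem 3 of the paper).**
With `Γ = Θ⁽¹⁾ ⊗ ⋯ ⊗ Θ⁽ᵈ⁾`, frequent colors `F = {c : E_c ≥ 1}`, infrequent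
colors `I = {c : E_c < 1}`, and `m_F, m_I ≥ 0` satisfying `v_c ≤ m_F E_c` on `F`
and `v_c ≤ m_I` on `I`, the rate `Λ_{cc'} = v_c v_{c'} Γ_{cc'}` is bounded by
`Λ'_{cc'} = Λ^(FF)_{cc'} + Λ^(FI)_{cc'} + Λ^(IF)_{cc'} + Λ^(II)_{cc'}` for all
colors `0 ≤ c, c' ≤ 2^d − 1`. -/
theorem proposal_validity (d n : ℕ) (hd : 1 ≤ d) (hn : 1 ≤ n)
    (θ : ℕ → ℕ → ℕ → ℝ) (hθ : ∀ k a b, 0 ≤ θ k a b)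
    (μ : ℕ → ℝ) (hμ : ∀ k, μ k ∈ Set.Icc (0 : ℝ) 1)
    (v : ℕ → ℕ) (mF mI : ℝ) (hmF : 0 ≤ mF) (hmI : 0 ≤ mI)
    (hF : ∀ c < 2 ^ d, 1 ≤ Ecol n d μ c → (v c : ℝ) ≤ mF * Ecol n d μ c)
    (hI : ∀ c < 2 ^ d, Ecol n d μ c < 1 → (v c : ℝ) ≤ mI)
    (c c' : ℕ) (hc : c < 2 ^ d) (hc' : c' < 2 ^ d) :
    (v c : ℝ) * (v c' : ℝ) * kronFold θ d c c'
      ≤ kronFold (thetaFF d n μ θ mF) d c c'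
        + kronFold (thetaFI d n μ θ mF mI) d c c'
        + kronFold (thetaIF d n μ θ mF mI) d c c'
        + kronFold (thetaII d θ mI) d c c' :=
  proposal_validity_general d n hd θ hθ μ hμ v mF mI hmF hmI hF hI c c' hc hc'
end

section
/- The sequence n · ( (1/log₂ n) · (1 − (log₂ n)/n) / (1 − 1/n) )^{log₂ n} tends to 0 as n → ∞ (n ranging over natural numbers n ≥ 5). -/
/-!
With `t = log₂ n`, the base lies in `[0, 1/t]` as soon as `1 ≤ t ≤ n`. Since `n = 2^t`, for
`t ≥ 4` we get `n · (1/t)^t ≤ n · (1/4)^t = n · n⁻² = 1/n`, so the terms are squeezed to `0`.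
-/

open Filter Real

lemma logb_two_natCast_le_self (n : ℕ) : logb 2 n ≤ n := by
  rcases n.eq_zero_or_pos with rfl | hn
  · simp
  rw [logb_le_iff_le_rpow one_lt_two (by exact_mod_cast hn), rpow_natCast]
  exact_mod_cast n.lt_two_pow_self.le

section ChernoffBase

variable {t x : ℝ}

lemma chernoff_base_nonneg (ht : 1 ≤ t) (htx : t ≤ x) :
    0 ≤ 1 / t * (1 - t / x) / (1 - 1 / x) := by
  have hx : 0 < x := by linarith
  have : t / x ≤ 1 := div_le_one_of_le₀ htx hx.le
  have : 1 / x ≤ 1 := div_le_one_of_le₀ (by linarith) hx.le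
  have : 0 < t := by linarith
  positivity

lemma chernoff_base_le_inv (ht : 1 ≤ t) (htx : t ≤ x) :
    1 / t * (1 - t / x) / (1 - 1 / x) ≤ 1 / t := by
  have hx : 0 < x := by linarith
  have hratio : (1 - t / x) / (1 - 1 / x) ≤ 1 := by
    refine div_le_one_of_le₀ ?_ ?_
    · have : 1 / x ≤ t / x := by gcongr
      linarith
    · have : 1 / x ≤ 1 := div_le_one_of_le₀ (by linarith) hx.le
      linarith
  rw [mul_div_assoc]
  exact mul_le_of_le_one_right (by positivity) hratio

end ChernoffBase

lemma mul_one_div_logb_two_rpow_le {x : ℝ} (hx : 16 ≤ x) :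
    x * (1 / logb 2 x) ^ logb 2 x ≤ 1 / x := by
  set t := logb 2 x with ht_def
  have hx0 : 0 < x := by linarith
  have ht : 4 ≤ t := by
    rw [ht_def, le_logb_iff_rpow_le one_lt_two hx0]
    norm_num [hx]
  have half_rpow : (1 / 2 : ℝ) ^ t = 1 / x := by
    rw [div_rpow zero_le_one zero_le_two, one_rpow, rpow_logb two_pos (by norm_num) hx0]
  calc x * (1 / t) ^ t ≤ x * (1 / 4) ^ t := by gcongr
    _ = x * ((1 / 2) ^ t) ^ 2 := by
        rw [← rpow_mul_natCast (by norm_num), mul_comm t, rpow_natCast_mul (by norm_num)]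
        norm_num
    _ = 1 / x := by
        rw [half_rpow]
        field_simp

/-- **Vanishing of the union bound over infrequent colors.**
The sequence `n · ((1/log₂ n) · (1 − (log₂ n)/n) / (1 − 1/n))^{log₂ n}` tends to
`0` as `n → ∞` (for `n ≥ 5` the base is well defined and positive). -/
theorem infrequent_union_bound_tendsto_zero :
    Filter.Tendsto
      (fun n : ℕ =>
        (n : ℝ) *
          ((1 / Real.logb 2 n) * (1 - Real.logb 2 n / (n : ℝ)) /
              (1 - 1 / (n : ℝ))) ^ Real.logb 2 n)
      Filter.atTop (nhds 0) := by
  have hlarge : ∀ᶠ n : ℕ in atTop, (16 : ℝ) ≤ n ∧ 1 ≤ logb 2 n := by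
    filter_upwards [eventually_ge_atTop 16] with n hn
    have hn : (16 : ℝ) ≤ n := by exact_mod_cast hn
    refine ⟨hn, ?_⟩
    rw [le_logb_iff_rpow_le one_lt_two (by linarith), rpow_one]
    linarith
  refine squeeze_zero' ?_ ?_ tendsto_one_div_atTop_nhds_zero_nat
  · filter_upwards [hlarge] with n ⟨_, ht⟩
    have := chernoff_base_nonneg ht (logb_two_natCast_le_self n)
    positivity
  · filter_upwards [hlarge] with n ⟨hn, ht⟩
    have hlog_le := logb_two_natCast_le_self n
    have := chernoff_base_nonneg ht hlog_le
    calc _ ≤ (n : ℝ) * (1 / logb 2 n) ^ logb 2 n := by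
          gcongr (n : ℝ) * ?_ ^ _
          exact chernoff_base_le_inv ht hlog_le
      _ ≤ 1 / n := mul_one_div_logb_two_rpow_le hn
end
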